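/- arXiv:2505.19861 — 6 statements merged into one kernel-verified Lean document; each statement's English description precedes it below -/
import Mathlib

section
/- Let ρ be a faithful density matrix that is not maximally mixed, with extreme eigenvalues λ_min, λ_max. For any Hermitian matrices A, B with all diagonal entries zero in an eigenbasis of ρ, (Tr(ρA²))·(Tr(ρB²)) ≥ ((λ_max + λ_min)²/(4(λ_max − λ_min)²))·|Tr(ρ[A,B])|². -/
open Matrix Finset

/-!
Write `T = Tr(ρ[A, B]) = ∑ᵢⱼ (λᵢ - λⱼ) Aᵢⱼ Bⱼᵢ`. For eigenvalues in `[λ_min, λ_max]` with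
`λ_min ≥ 0` one has `|λᵢ - λⱼ| (λ_max + λ_min) ≤ (λ_max - λ_min) (λᵢ + λⱼ)`, so
`|T| (λ_max + λ_min) ≤ (λ_max - λ_min) ∑ᵢⱼ (λᵢ + λⱼ) |Aᵢⱼ| |Bᵢⱼ|`. Cauchy–Schwarz with the
weights `λᵢ + λⱼ` bounds the square of the last sum by the product of
`∑ᵢⱼ (λᵢ + λⱼ) |Aᵢⱼ|² = 2 Tr(ρA²)` and the same expression for `B`.
-/

theorem abs_sub_mul_add_le {R : Type*} [CommRing R] [LinearOrder R] [IsStrictOrderedRing R]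
    {m M x y : R} (hm : 0 ≤ m) (hx : x ∈ Set.Icc m M) (hy : y ∈ Set.Icc m M) :
    |x - y| * (M + m) ≤ (M - m) * (x + y) := by
  obtain ⟨hmx, hxM⟩ := hx
  obtain ⟨hmy, hyM⟩ := hy
  rcases abs_cases (x - y) with ⟨h, _⟩ | ⟨h, _⟩ <;> rw [h] <;> nlinarith

theorem sq_sum_sum_mul_mul_le {ι κ R : Type*} [Fintype ι] [Fintype κ] [CommRing R]
    [LinearOrder R] [IsStrictOrderedRing R] {c a b : ι → κ → R} (hc : ∀ i j, 0 ≤ c i j) :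
    (∑ i, ∑ j, c i j * (a i j * b i j)) ^ 2 ≤
      (∑ i, ∑ j, c i j * a i j ^ 2) * ∑ i, ∑ j, c i j * b i j ^ 2 := by
  have hterm (f : ι → κ → R) (i : ι) (j : κ) : 0 ≤ c i j * f i j ^ 2 :=
    mul_nonneg (hc i j) (sq_nonneg _)
  refine sum_sq_le_sum_mul_sum_of_sq_le_mul _
    (fun i _ => sum_nonneg fun j _ => hterm a i j) (fun i _ => sum_nonneg fun j _ => hterm b i j)
    fun i _ => sum_sq_le_sum_mul_sum_of_sq_le_mul _
      (fun j _ => hterm a i j) (fun j _ => hterm b i j) fun j _ => le_of_eq (by ring)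

namespace Matrix

variable {n : Type*}

theorem IsHermitian.norm_apply_symm {α : Type*} [SeminormedAddCommGroup α] [StarAddMonoid α]
    [NormedStarGroup α] {M : Matrix n n α} (hM : M.IsHermitian) (i j : n) :
    ‖M j i‖ = ‖M i j‖ := by
  rw [← hM.apply i j, norm_star]

variable [Fintype n]

theorem IsHermitian.mul_self_apply_self {M : Matrix n n ℂ} (hM : M.IsHermitian) (i : n) :
    (M * M) i i = ((∑ j, ‖M i j‖ ^ 2 : ℝ) : ℂ) := by
  rw [mul_apply]
  push_cast
  refine sum_congr rfl fun j _ => ?_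
  rw [← hM.apply j i, Complex.star_def, Complex.mul_conj']

theorem IsHermitian.sum_sum_add_mul_norm_sq {M : Matrix n n ℂ} (hM : M.IsHermitian)
    (w : n → ℝ) :
    ∑ i, ∑ j, (w i + w j) * ‖M i j‖ ^ 2 = 2 * ∑ i, ∑ j, w i * ‖M i j‖ ^ 2 := by
  have hswap : ∑ i, ∑ j, w j * ‖M i j‖ ^ 2 = ∑ i, ∑ j, w i * ‖M i j‖ ^ 2 := by
    rw [sum_comm]
    simp only [hM.norm_apply_symm]
  simp only [add_mul, sum_add_distrib, hswap, two_mul]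

variable [DecidableEq n]

theorem trace_diagonal_mul {α : Type*} [CommSemiring α] (w : n → α) (M : Matrix n n α) :
    (diagonal w * M).trace = ∑ i, w i * M i i := by
  simp [trace, diagonal_mul]

theorem trace_diagonal_mul_commutator {α : Type*} [CommRing α] (w : n → α)
    (A B : Matrix n n α) :
    (diagonal w * (A * B - B * A)).trace = ∑ i, ∑ j, (w i - w j) * (A i j * B j i) := by
  rw [mul_sub, trace_sub, trace_diagonal_mul, trace_diagonal_mul]
  simp only [mul_apply, mul_sum, sub_mul, sum_sub_distrib]
  congr 1
  rw [sum_comm]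
  simp only [mul_comm (B _ _)]

theorem IsHermitian.re_trace_diagonal_mul_mul_self {M : Matrix n n ℂ} (hM : M.IsHermitian)
    (w : n → ℝ) :
    (diagonal (fun i => (w i : ℂ)) * M * M).trace.re = ∑ i, ∑ j, w i * ‖M i j‖ ^ 2 := by
  simp only [mul_assoc, trace_diagonal_mul, hM.mul_self_apply_self, ← Complex.ofReal_mul,
    ← Complex.ofReal_sum, Complex.ofReal_re, mul_sum]

theorem norm_trace_diagonal_mul_commutator_mul_le {A B : Matrix n n ℂ} (hB : B.IsHermitian)
    {w : n → ℝ} {m M : ℝ} (hm : 0 ≤ m) (hmM : m ≤ M) (hw : ∀ i, w i ∈ Set.Icc m M) :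
    ‖(diagonal (fun i => (w i : ℂ)) * (A * B - B * A)).trace‖ * (M + m) ≤
      (M - m) * ∑ i, ∑ j, (w i + w j) * (‖A i j‖ * ‖B i j‖) := by
  calc _ ≤ (∑ i, ∑ j, |w i - w j| * (‖A i j‖ * ‖B i j‖)) * (M + m) := by
        rw [trace_diagonal_mul_commutator]
        gcongr ?_ * _
        · linarith
        refine (norm_sum_le _ _).trans (sum_le_sum fun i _ => (norm_sum_le _ _).trans_eq ?_)
        simp [hB.norm_apply_symm, ← Complex.ofReal_sub, Complex.norm_real]
    _ = ∑ i, ∑ j, |w i - w j| * (M + m) * (‖A i j‖ * ‖B i j‖) := by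
        simp only [sum_mul, mul_right_comm]
    _ ≤ ∑ i, ∑ j, (M - m) * (w i + w j) * (‖A i j‖ * ‖B i j‖) := by
        refine sum_le_sum fun i _ => sum_le_sum fun j _ => ?_
        exact mul_le_mul_of_nonneg_right (abs_sub_mul_add_le hm (hw i) (hw j)) (by positivity)
    _ = _ := by simp only [mul_sum, mul_assoc]

theorem IsHermitian.sq_norm_trace_diagonal_mul_commutator_mul_le {A B : Matrix n n ℂ}
    (hA : A.IsHermitian) (hB : B.IsHermitian) {w : n → ℝ} {m M : ℝ} (hm : 0 ≤ m) (hmM : m ≤ M)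
    (hw : ∀ i, w i ∈ Set.Icc m M) :
    (‖(diagonal (fun i => (w i : ℂ)) * (A * B - B * A)).trace‖ * (M + m)) ^ 2 ≤
      (M - m) ^ 2 * (4 * ((diagonal (fun i => (w i : ℂ)) * A * A).trace.re *
        (diagonal (fun i => (w i : ℂ)) * B * B).trace.re)) := by
  have hweight (i j : n) : 0 ≤ w i + w j := by linarith [(hw i).1, (hw j).1]
  have hcs := sq_sum_sum_mul_mul_le (a := fun i j => ‖A i j‖) (b := fun i j => ‖B i j‖) hweight
  rw [hA.sum_sum_add_mul_norm_sq, hB.sum_sum_add_mul_norm_sq] at hcs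
  have hT := norm_trace_diagonal_mul_commutator_mul_le (A := A) hB hm hmM hw
  rw [hA.re_trace_diagonal_mul_mul_self, hB.re_trace_diagonal_mul_mul_self]
  calc _ ≤ ((M - m) * ∑ i, ∑ j, (w i + w j) * (‖A i j‖ * ‖B i j‖)) ^ 2 :=
        pow_le_pow_left₀ (mul_nonneg (norm_nonneg _) (by linarith)) hT 2
    _ ≤ _ := by
        rw [mul_pow]
        exact mul_le_mul_of_nonneg_left (hcs.trans_eq (by ring)) (sq_nonneg _)

end Matrix

theorem gen_robertson_norm_general {d : ℕ} (l : Fin (d + 1) → ℝ)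
    (hmono : Monotone l) (hpos : 0 < l 0) (hne : l 0 < l (Fin.last d))
    (A B : Matrix (Fin (d + 1)) (Fin (d + 1)) ℂ)
    (hA : A.IsHermitian) (hB : B.IsHermitian) :
    ((Matrix.diagonal (fun i => (l i : ℂ)) * A * A).trace.re) *
      ((Matrix.diagonal (fun i => (l i : ℂ)) * B * B).trace.re) ≥
    ((l (Fin.last d) + l 0) ^ 2 / (4 * (l (Fin.last d) - l 0) ^ 2)) *
      ‖
        ((Matrix.diagonal (fun i => (l i : ℂ)) * (A * B - B * A)).trace)‖ ^ 2 := by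
  have hl : ∀ i, l i ∈ Set.Icc (l 0) (l (Fin.last d)) :=
    fun i => ⟨hmono (Fin.zero_le i), hmono (Fin.le_last i)⟩
  have key := hA.sq_norm_trace_diagonal_mul_commutator_mul_le hB hpos.le hne.le hl
  have hgap : 0 < 4 * (l (Fin.last d) - l 0) ^ 2 := by nlinarith [sub_pos.mpr hne]
  rw [ge_iff_le, div_mul_eq_mul_div, div_le_iff₀ hgap]
  linarith

/-- Key norm inequality: generalized Robertson relation for Hermitian matrices
with vanishing diagonal, in an eigenbasis of a faithful non-maximally-mixed
diagonal density matrix. -/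
theorem gen_robertson_norm {d : ℕ} (l : Fin (d + 1) → ℝ)
    (hmono : Monotone l) (hpos : 0 < l 0) (hne : l 0 < l (Fin.last d))
    (hsum : ∑ i, l i = 1)
    (A B : Matrix (Fin (d + 1)) (Fin (d + 1)) ℂ)
    (hA : A.IsHermitian) (hB : B.IsHermitian)
    (hAdiag : ∀ i, A i i = 0) (hBdiag : ∀ i, B i i = 0) :
    ((Matrix.diagonal (fun i => (l i : ℂ)) * A * A).trace.re) *
      ((Matrix.diagonal (fun i => (l i : ℂ)) * B * B).trace.re) ≥
    ((l (Fin.last d) + l 0) ^ 2 / (4 * (l (Fin.last d) - l 0) ^ 2)) *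
      ‖
        ((Matrix.diagonal (fun i => (l i : ℂ)) * (A * B - B * A)).trace)‖ ^ 2 :=
  gen_robertson_norm_general l hmono hpos hne A B hA hB
end

section
/- Let ρ_max = I/d be the maximally mixed state on a d-dimensional space. Then for any Hermitian matrices A, B, V_{ρ_max}(A)·V_{ρ_max}(B) ≥ (1/d²)·‖[A,B]‖_op², where ‖·‖_op is the operator norm. -/
/-!
Shift `A` and `B` by the midpoints `a`, `b` of their spectra. This does not change the
commutator, so `‖[A, B]‖ ≤ 2 ‖A - a‖ ‖B - b‖`, and `‖A - a‖` is half the spread `s_A` of the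
eigenvalues of `A`. The variance in the maximally mixed state is the variance of the uniform
distribution on the eigenvalues, and the two extreme eigenvalues alone make it at least
`s_A² / (2d)`. Multiplying the two estimates gives the bound.
-/

open Matrix Unitary
open scoped Matrix.Norms.L2Operator

section Commutator

variable {S R : Type*} [CommSemiring S]

theorem commutator_eq_of_sub_smul_one [Ring R] [Algebra S R] (x y : R) (a b : S) :
    x * y - y * x = (x - a • 1) * (y - b • 1) - (y - b • 1) * (x - a • 1) := by
  simp only [mul_sub, sub_mul, smul_mul_assoc, mul_smul_comm, one_mul, mul_one, smul_sub,
    smul_smul, mul_comm a b]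
  abel

theorem norm_commutator_le_of_sub_smul_one [NormedRing R] [Algebra S R] (x y : R) (a b : S) :
    ‖x * y - y * x‖ ≤ 2 * ‖x - a • 1‖ * ‖y - b • 1‖ := by
  rw [commutator_eq_of_sub_smul_one x y a b]
  calc _ ≤ ‖(x - a • 1) * (y - b • 1)‖ + ‖(y - b • 1) * (x - a • 1)‖ := norm_sub_le _ _
    _ ≤ ‖x - a • 1‖ * ‖y - b • 1‖ + ‖y - b • 1‖ * ‖x - a • 1‖ :=
      add_le_add (norm_mul_le _ _) (norm_mul_le _ _)
    _ = _ := by ring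

end Commutator

theorem Fintype.sq_sub_le_two_card_mul_variance {ι : Type*} [Fintype ι] (e : ι → ℝ) (i j : ι) :
    (e i - e j) ^ 2 ≤ 2 * Fintype.card ι *
      ((1 / Fintype.card ι) * ∑ k, e k ^ 2 - ((1 / Fintype.card ι) * ∑ k, e k) ^ 2) := by
  have hcard : (Fintype.card ι : ℝ) ≠ 0 := by
    exact_mod_cast (Fintype.card_pos_iff.mpr ⟨i⟩).ne'
  set m := (1 / Fintype.card ι : ℝ) * ∑ k, e k
  have hcentered : Fintype.card ι * ((1 / Fintype.card ι) * ∑ k, e k ^ 2 - m ^ 2) =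
      ∑ k, (e k - m) ^ 2 := by
    simp only [sub_sq, Finset.sum_add_distrib, Finset.sum_sub_distrib, ← Finset.sum_mul,
      ← Finset.mul_sum, Finset.sum_const, Finset.card_univ, nsmul_eq_mul, m]
    field_simp
    ring
  rw [mul_assoc, hcentered]
  obtain rfl | hij := eq_or_ne i j
  · rw [sub_self, zero_pow two_ne_zero]
    positivity
  · classical
    calc _ ≤ 2 * ((e i - m) ^ 2 + (e j - m) ^ 2) := by
          nlinarith [sq_nonneg (e i + e j - 2 * m)]
      _ = 2 * ∑ k ∈ {i, j}, (e k - m) ^ 2 := by rw [Finset.sum_pair hij]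
      _ ≤ 2 * ∑ k, (e k - m) ^ 2 := by
        gcongr
        exact Finset.subset_univ _

theorem Matrix.trace_conjStarAlgAut {n R : Type*} [Fintype n] [DecidableEq n] [CommSemiring R]
    [StarRing R] (u : unitary (Matrix n n R)) (X : Matrix n n R) :
    (conjStarAlgAut R _ u X).trace = X.trace := by
  rw [conjStarAlgAut_apply, trace_mul_cycle, coe_star_mul_self, one_mul]

namespace Matrix

variable {𝕜 n : Type*} [RCLike 𝕜] [Fintype n] [DecidableEq n]

/-- `V_ρ(X)`; for Hermitian `ρ` and `X` both traces are real, so taking real parts loses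
nothing. -/
noncomputable def quantumVariance (ρ X : Matrix n n 𝕜) : ℝ :=
  RCLike.re (ρ * X * X).trace - (RCLike.re (ρ * X).trace) ^ 2

namespace IsHermitian

variable {A : Matrix n n 𝕜}

theorem sub_smul_one_eq_conjStarAlgAut (hA : A.IsHermitian) (a : ℝ) :
    A - (a : 𝕜) • 1 = conjStarAlgAut 𝕜 _ hA.eigenvectorUnitary
      (diagonal fun i ↦ ((hA.eigenvalues i - a : ℝ) : 𝕜)) := by
  conv_lhs => rw [hA.spectral_theorem, ← map_one (conjStarAlgAut 𝕜 _ hA.eigenvectorUnitary)]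
  rw [← map_smul, ← map_sub, smul_one_eq_diagonal, diagonal_sub]
  simp

theorem trace_mul_self (hA : A.IsHermitian) :
    (A * A).trace = ∑ i, ((hA.eigenvalues i ^ 2 : ℝ) : 𝕜) := by
  conv_lhs => rw [hA.spectral_theorem]
  rw [← map_mul, trace_conjStarAlgAut, diagonal_mul_diagonal, trace_diagonal]
  simp [sq]

theorem quantumVariance_smul_one (hA : A.IsHermitian) (p : ℝ) :
    quantumVariance (p • 1) A =
      p * ∑ i, hA.eigenvalues i ^ 2 - (p * ∑ i, hA.eigenvalues i) ^ 2 := by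
  simp only [quantumVariance, smul_mul_assoc, one_mul, trace_smul, hA.trace_mul_self,
    hA.trace_eq_sum_eigenvalues, ← RCLike.ofReal_sum, RCLike.smul_re, RCLike.ofReal_re]

theorem l2_opNorm_sub_smul_one (hA : A.IsHermitian) (a : ℝ) :
    ‖A - (a : 𝕜) • 1‖ = ‖fun i ↦ ((hA.eigenvalues i - a : ℝ) : 𝕜)‖ := by
  rw [hA.sub_smul_one_eq_conjStarAlgAut, conjStarAlgAut_apply, ← coe_star,
    CStarRing.norm_mul_coe_unitary, CStarRing.norm_coe_unitary_mul, l2_opNorm_diagonal]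

theorem exists_sq_l2_opNorm_sub_smul_one_le (hA : A.IsHermitian) :
    ∃ a : ℝ, ‖A - (a : 𝕜) • 1‖ ^ 2 ≤
      Fintype.card n / 2 * quantumVariance ((1 / Fintype.card n : ℝ) • 1) A := by
  rcases isEmpty_or_nonempty n with hn | hn
  · exact ⟨0, by simp [Subsingleton.elim (A - _) 0]⟩
  obtain ⟨iM, hiM⟩ := Finite.exists_max hA.eigenvalues
  obtain ⟨im, him⟩ := Finite.exists_min hA.eigenvalues
  refine ⟨(hA.eigenvalues iM + hA.eigenvalues im) / 2, ?_⟩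
  have hnorm : ‖A - (((hA.eigenvalues iM + hA.eigenvalues im) / 2 : ℝ) : 𝕜) • 1‖ ≤
      (hA.eigenvalues iM - hA.eigenvalues im) / 2 := by
    rw [hA.l2_opNorm_sub_smul_one, pi_norm_le_iff_of_nonneg (by linarith [hiM im])]
    intro i
    rw [RCLike.norm_ofReal, abs_le]
    constructor <;> linarith [hiM i, him i]
  have hspread := Fintype.sq_sub_le_two_card_mul_variance hA.eigenvalues iM im
  rw [← hA.quantumVariance_smul_one] at hspread
  calc _ ≤ ((hA.eigenvalues iM - hA.eigenvalues im) / 2) ^ 2 :=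
        pow_le_pow_left₀ (norm_nonneg _) hnorm 2
    _ ≤ _ := by linarith

end IsHermitian

end Matrix

theorem maximally_mixed_UR_general {d : ℕ}
    (A B : Matrix (Fin d) (Fin d) ℂ)
    (hA : A.IsHermitian) (hB : B.IsHermitian) :
    (((1 / (d : ℝ)) • (1 : Matrix (Fin d) (Fin d) ℂ) * A * A).trace.re -
        (((1 / (d : ℝ)) • (1 : Matrix (Fin d) (Fin d) ℂ) * A).trace.re) ^ 2) *
      (((1 / (d : ℝ)) • (1 : Matrix (Fin d) (Fin d) ℂ) * B * B).trace.re -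
        (((1 / (d : ℝ)) • (1 : Matrix (Fin d) (Fin d) ℂ) * B).trace.re) ^ 2) ≥
    (1 / (d : ℝ) ^ 2) * ‖Matrix.toEuclideanCLM (𝕜 := ℂ) (A * B - B * A)‖ ^ 2 := by
  obtain ⟨a, ha⟩ := hA.exists_sq_l2_opNorm_sub_smul_one_le
  obtain ⟨b, hb⟩ := hB.exists_sq_l2_opNorm_sub_smul_one_le
  simp only [Fintype.card_fin] at ha hb
  have hcomm := norm_commutator_le_of_sub_smul_one A B (a : ℂ) (b : ℂ)
  rw [ge_iff_le, ← cstar_norm_def]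
  change _ ≤ quantumVariance ((1 / (d : ℝ)) • 1) A * quantumVariance ((1 / (d : ℝ)) • 1) B
  calc 1 / (d : ℝ) ^ 2 * ‖A * B - B * A‖ ^ 2
      ≤ 1 / (d : ℝ) ^ 2 * (2 * ‖A - (a : ℂ) • 1‖ * ‖B - (b : ℂ) • 1‖) ^ 2 := by
        gcongr
    _ = 4 / (d : ℝ) ^ 2 * (‖A - (a : ℂ) • 1‖ ^ 2 * ‖B - (b : ℂ) • 1‖ ^ 2) := by ring
    _ ≤ 4 / (d : ℝ) ^ 2 * ((d / 2 * quantumVariance ((1 / (d : ℝ)) • 1) A) *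
          (d / 2 * quantumVariance ((1 / (d : ℝ)) • 1) B)) :=
        mul_le_mul_of_nonneg_left
          (mul_le_mul ha hb (sq_nonneg _) ((sq_nonneg _).trans ha)) (by positivity)
    _ = _ := by
        rcases eq_or_ne (d : ℝ) 0 with hd | hd
        · simp [hd, quantumVariance]
        · field_simp
          ring

/-- Uncertainty relation for the maximally mixed state, with the operator norm
of the commutator. -/
theorem maximally_mixed_UR {d : ℕ} (hd : 0 < d)
    (A B : Matrix (Fin d) (Fin d) ℂ)
    (hA : A.IsHermitian) (hB : B.IsHermitian) :
    (((1 / (d : ℝ)) • (1 : Matrix (Fin d) (Fin d) ℂ) * A * A).trace.re -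
        (((1 / (d : ℝ)) • (1 : Matrix (Fin d) (Fin d) ℂ) * A).trace.re) ^ 2) *
      (((1 / (d : ℝ)) • (1 : Matrix (Fin d) (Fin d) ℂ) * B * B).trace.re -
        (((1 / (d : ℝ)) • (1 : Matrix (Fin d) (Fin d) ℂ) * B).trace.re) ^ 2) ≥
    (1 / (d : ℝ) ^ 2) * ‖Matrix.toEuclideanCLM (𝕜 := ℂ) (A * B - B * A)‖ ^ 2 :=
  maximally_mixed_UR_general A B hA hB
end

section
/- Let ρ_max = I/d and A, B Hermitian. For every unit vector ψ ∈ ℂ^d, V_{ρ_max}(A)·V_{ρ_max}(B) ≥ (1/d²)·|⟨ψ|[A,B]|ψ⟩|². -/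
open Matrix

section MMURAux
variable {d : ℕ}

lemma dot_self_eq (u : Fin d → ℂ) :
    star u ⬝ᵥ u = ((∑ i, Complex.normSq (u i) : ℝ) : ℂ) := by
  simp [dotProduct, Complex.normSq_eq_conj_mul_self]

lemma dot_self_re_nonneg (u : Fin d → ℂ) : 0 ≤ (star u ⬝ᵥ u).re := by
  rw [dot_self_eq]
  simp only [Complex.ofReal_re]
  exact Finset.sum_nonneg fun i _ => Complex.normSq_nonneg _

lemma trace_mul_conjTranspose_re_nonneg (M : Matrix (Fin d) (Fin d) ℂ) :
    0 ≤ (trace (M * Mᴴ)).re := by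
  have h : trace (M * Mᴴ) = ∑ i, ∑ j, ((Complex.normSq (M i j) : ℝ) : ℂ) := by
    simp [trace, diag, mul_apply, conjTranspose_apply, Complex.mul_conj]
  rw [h]
  simp only [Complex.re_sum, Complex.ofReal_re]
  exact Finset.sum_nonneg fun i _ => Finset.sum_nonneg fun j _ => Complex.normSq_nonneg _

lemma cs (u v : Fin d → ℂ) :
    ‖star u ⬝ᵥ v‖ ^ 2 ≤ (star u ⬝ᵥ u).re * (star v ⬝ᵥ v).re := by
  let u' : EuclideanSpace ℂ (Fin d) := WithLp.toLp 2 u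
  let v' : EuclideanSpace ℂ (Fin d) := WithLp.toLp 2 v
  have h2 : ‖(inner ℂ u' v' : ℂ)‖ ≤ ‖u'‖ * ‖v'‖ := by
    simpa using norm_inner_le_norm (𝕜 := ℂ) u' v'
  have h3 : (star u ⬝ᵥ u).re = ‖u'‖ ^ 2 := by
    rw [show star u ⬝ᵥ u = inner ℂ u' u' from
      ((EuclideanSpace.inner_eq_star_dotProduct u' u').trans (dotProduct_comm _ _)).symm, ← RCLike.re_to_complex]
    exact inner_self_eq_norm_sq u'
  have h4 : (star v ⬝ᵥ v).re = ‖v'‖ ^ 2 := by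
    rw [show star v ⬝ᵥ v = inner ℂ v' v' from
      ((EuclideanSpace.inner_eq_star_dotProduct v' v').trans (dotProduct_comm _ _)).symm, ← RCLike.re_to_complex]
    exact inner_self_eq_norm_sq v'
  rw [show star u ⬝ᵥ v = inner ℂ u' v' from
      ((EuclideanSpace.inner_eq_star_dotProduct u' v').trans (dotProduct_comm _ _)).symm, h3, h4]
  calc ‖(inner ℂ u' v' : ℂ)‖ ^ 2 ≤ (‖u'‖ * ‖v'‖) ^ 2 := by
        have := norm_nonneg (inner ℂ u' v' : ℂ)
        nlinarith
    _ = ‖u'‖ ^ 2 * ‖v'‖ ^ 2 := by ring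


lemma vmv_mul (ψ w : Fin d → ℂ) (Y : Matrix (Fin d) (Fin d) ℂ) :
    vecMulVec ψ w * Y = vecMulVec ψ (w ᵥ* Y) := by
  ext i j
  simp [mul_apply, vecMulVec_apply, vecMul, dotProduct, Finset.mul_sum, mul_assoc]

lemma mul_vmv (ψ w : Fin d → ℂ) (Y : Matrix (Fin d) (Fin d) ℂ) :
    Y * vecMulVec ψ w = vecMulVec (Y *ᵥ ψ) w := by
  ext i j
  simp [mul_apply, vecMulVec_apply, mulVec, dotProduct, Finset.sum_mul, mul_assoc]

lemma trace_vmv (ψ w : Fin d → ℂ) : trace (vecMulVec ψ w) = w ⬝ᵥ ψ := by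
  simp [trace, diag, vecMulVec_apply, dotProduct, mul_comm]

lemma trace_P_mul (ψ : Fin d → ℂ) (Y : Matrix (Fin d) (Fin d) ℂ) :
    trace (vecMulVec ψ (star ψ) * Y) = star ψ ⬝ᵥ Y *ᵥ ψ := by
  rw [vmv_mul, trace_vmv, dotProduct_mulVec]

lemma vmv_vmv (a b c e : Fin d → ℂ) :
    vecMulVec a b * vecMulVec c e = (b ⬝ᵥ c) • vecMulVec a e := by
  ext i j
  simp [mul_apply, vecMulVec_apply, dotProduct, Finset.sum_mul, Finset.mul_sum]
  ring_nf
  apply Finset.sum_congr rfl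
  intros; ring

lemma var_bound (ψ : Fin d → ℂ) (hψ1 : star ψ ⬝ᵥ ψ = (1:ℂ))
    (X : Matrix (Fin d) (Fin d) ℂ) (hX : Xᴴ = X) :
    2 * (star (X *ᵥ ψ - (star ψ ⬝ᵥ X *ᵥ ψ) • ψ) ⬝ᵥ
        (X *ᵥ ψ - (star ψ ⬝ᵥ X *ᵥ ψ) • ψ)).re ≤ (trace (X*X)).re := by
  set μ : ℂ := star ψ ⬝ᵥ X *ᵥ ψ with hμdef
  set s : ℂ := star ψ ⬝ᵥ (X*X) *ᵥ ψ with hsdef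
  have hμ : star μ = μ := by
    have h := star_dotProduct_star (X *ᵥ ψ) (star ψ)
    rw [star_star] at h
    rw [hμdef, ← h, star_mulVec, hX, ← dotProduct_mulVec]
  set P : Matrix (Fin d) (Fin d) ℂ := vecMulVec ψ (star ψ) with hPdef
  have hPP : P * P = P := by
    rw [hPdef, vmv_vmv, hψ1, one_smul]
  have hPh : Pᴴ = P := by
    ext i j; simp [hPdef, conjTranspose_apply, vecMulVec_apply, mul_comm]
  have hXP : X * P = vecMulVec (X *ᵥ ψ) (star ψ) := mul_vmv ψ (star ψ) X
  have hPXP : P * (X * P) = μ • P := by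
    rw [hXP, hPdef, vmv_vmv, hμdef]
  have eP : trace P = 1 := by rw [hPdef, trace_vmv, hψ1]
  have ePX : trace (P * X) = μ := trace_P_mul ψ X
  have ePXX : trace (P * (X * X)) = s := trace_P_mul ψ (X*X)
  -- auxiliary trace evaluations
  have eXPX : trace (X * (P * X)) = s := by
    rw [trace_mul_comm, mul_assoc, ePXX]
  have eXXP : trace (X * (X * P)) = s := by
    rw [← mul_assoc, trace_mul_comm, ePXX]
  have eXP : trace (X * P) = μ := by rw [trace_mul_comm, ePX]
  have ePXXP : trace (P * (X * (X * P))) = s := by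
    rw [show X * (X * P) = (X*X) * P by rw [mul_assoc], trace_mul_comm,
      mul_assoc, hPP, trace_mul_comm, ePXX]
  have ePXP : trace (P * (X * P)) = μ := by
    rw [hPXP, trace_smul, eP, smul_eq_mul, mul_one]
  have eXPXP : trace (X * (P * (X * P))) = μ * μ := by
    rw [hPXP, Matrix.mul_smul, trace_smul, eXP, smul_eq_mul]
  have ePPX : P * (P * X) = P * X := by rw [← mul_assoc, hPP]
  have ePXPX : trace (P * (X * (P * X))) = μ * μ := by
    rw [show X * (P * X) = (X * P) * X by rw [mul_assoc], ← mul_assoc, hPXP,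
      Matrix.smul_mul, trace_smul, ePX, smul_eq_mul]
  set M : Matrix (Fin d) (Fin d) ℂ := X - X*P - P*X + μ • P with hMdef
  have hMh : Mᴴ = M := by
    rw [hMdef]
    simp only [conjTranspose_add, conjTranspose_sub, conjTranspose_mul,
      conjTranspose_smul, hPh, hX, hμ]
    abel
  have hMN : ∀ N, trace (M * N) =
      trace (X * N) - trace (X * (P * N)) - trace (P * (X * N)) + μ * trace (P * N) := by
    intro N
    rw [hMdef]
    simp only [Matrix.sub_mul, Matrix.add_mul, Matrix.smul_mul, trace_sub,
      trace_add, trace_smul, mul_assoc, smul_eq_mul]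
  have r2 : trace (X * (P * M)) = trace (M * (X * P)) := by
    rw [trace_mul_comm, mul_assoc, trace_mul_comm, mul_assoc]
  have r3 : trace (P * (X * M)) = trace (M * (P * X)) := by
    rw [← mul_assoc, trace_mul_comm]
  have eXPPX : trace (X * (P * (P * X))) = s := by rw [ePPX, eXPX]
  have ePPX' : trace (P * (P * X)) = μ := by rw [ePPX, ePX]
  have eXPP : trace (X * (P * P)) = μ := by rw [hPP, eXP]
  have ePP : trace (P * P) = 1 := by rw [hPP, eP]
  have hid : trace (M * M) = trace (X*X) - 2 * s + μ^2 := by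
    have h0 := hMN M
    rw [trace_mul_comm X M, r2, r3, trace_mul_comm P M] at h0
    rw [hMN X, hMN (X*P), hMN (P*X), hMN P] at h0
    rw [eXPX, ePXX, ePX, eXXP, eXPXP, ePXXP, ePXP, eXPPX, ePXPX, ePPX', eXP, eXPP, ePP] at h0
    rw [h0]; ring
  -- nonnegativity of trace (M * M)
  have hnn : 0 ≤ (trace (M * M)).re := by
    have h := trace_mul_conjTranspose_re_nonneg M
    rwa [hMh] at h
  have c1 : star (X *ᵥ ψ) ⬝ᵥ (X *ᵥ ψ) = s := by
    rw [star_mulVec, hX, ← dotProduct_mulVec, mulVec_mulVec]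
  have c2 : star (X *ᵥ ψ) ⬝ᵥ ψ = μ := by
    rw [star_mulVec, hX, ← dotProduct_mulVec]
  have huu : star (X *ᵥ ψ - μ • ψ) ⬝ᵥ (X *ᵥ ψ - μ • ψ) = s - μ ^ 2 := by
    rw [star_sub, star_smul]
    simp only [sub_dotProduct, dotProduct_sub, smul_dotProduct, dotProduct_smul,
      smul_eq_mul]
    rw [c1, c2, hψ1, hμ, ← hμdef]
    ring
  have hμim : μ.im = 0 := by
    have h := congrArg Complex.im hμ
    simp only [Complex.star_def, Complex.conj_im] at h
    linarith
  have hμsq : 0 ≤ (μ ^ 2).re := by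
    rw [sq, Complex.mul_re, hμim]
    nlinarith [sq_nonneg μ.re]
  have h2 := congrArg Complex.re hid
  simp only [Complex.sub_re, Complex.add_re, Complex.mul_re, Complex.re_ofNat,
    Complex.im_ofNat, zero_mul, sub_zero] at h2
  rw [huu]
  simp only [Complex.sub_re]
  linarith


lemma exp_real (ψ : Fin d → ℂ) (X : Matrix (Fin d) (Fin d) ℂ) (hX : Xᴴ = X) :
    star (star ψ ⬝ᵥ X *ᵥ ψ) = star ψ ⬝ᵥ X *ᵥ ψ := by
  have h := star_dotProduct_star (X *ᵥ ψ) (star ψ)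
  rw [star_star] at h
  rw [← h, star_mulVec, hX, ← dotProduct_mulVec]

lemma comm_bound (ψ : Fin d → ℂ) (hψ1 : star ψ ⬝ᵥ ψ = (1:ℂ))
    (X Y : Matrix (Fin d) (Fin d) ℂ) (hX : Xᴴ = X) (hY : Yᴴ = Y) :
    ‖star ψ ⬝ᵥ (X * Y - Y * X) *ᵥ ψ‖ ^ 2 ≤
      (trace (X*X)).re * (trace (Y*Y)).re := by
  set μX : ℂ := star ψ ⬝ᵥ X *ᵥ ψ with hμXdef
  set μY : ℂ := star ψ ⬝ᵥ Y *ᵥ ψ with hμYdef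
  have hμX : star μX = μX := exp_real ψ X hX
  have hμY : star μY = μY := exp_real ψ Y hY
  set u : Fin d → ℂ := X *ᵥ ψ - μX • ψ with hudef
  set v : Fin d → ℂ := Y *ᵥ ψ - μY • ψ with hvdef
  set c : ℂ := star u ⬝ᵥ v with hcdef
  set e : ℂ := star (X *ᵥ ψ) ⬝ᵥ (Y *ᵥ ψ) with hedef
  have cX : star (X *ᵥ ψ) ⬝ᵥ ψ = μX := by
    rw [star_mulVec, hX, ← dotProduct_mulVec]
  have he : c = e - μX * μY := by
    rw [hcdef, hudef, hvdef, star_sub, star_smul]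
    simp only [sub_dotProduct, dotProduct_sub, smul_dotProduct, dotProduct_smul,
      smul_eq_mul]
    rw [cX, hψ1, hμX, ← hedef, ← hμYdef]
    ring
  have ht1 : star ψ ⬝ᵥ (X * Y) *ᵥ ψ = e := by
    rw [hedef, star_mulVec, hX, ← dotProduct_mulVec, ← mulVec_mulVec]
  have ht2 : star ψ ⬝ᵥ (Y * X) *ᵥ ψ = star e := by
    have h := star_dotProduct_star (Y *ᵥ ψ) (star (X *ᵥ ψ))
    rw [star_star] at h
    rw [← h, star_mulVec, hY, ← dotProduct_mulVec, ← mulVec_mulVec]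
  have hT : star ψ ⬝ᵥ (X * Y - Y * X) *ᵥ ψ = c - star c := by
    rw [Matrix.sub_mulVec, dotProduct_sub, ht1, ht2, he]
    rw [star_sub, star_mul', hμX, hμY]
    ring
  rw [hT]
  have habs : ‖c - star c‖ ≤ 2 * ‖c‖ := by
    rw [sub_eq_add_neg]
    refine (norm_add_le _ _).trans ?_
    rw [norm_neg]
    rw [show star c = (starRingEnd ℂ) c from rfl, Complex.norm_conj]
    linarith
  have hcs := cs u v
  have hu := var_bound ψ hψ1 X hX
  have hv := var_bound ψ hψ1 Y hY
  have hnu := dot_self_re_nonneg u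
  have hnv := dot_self_re_nonneg v
  calc ‖c - star c‖ ^ 2 ≤ (2 * ‖c‖) ^ 2 := by
        nlinarith [norm_nonneg (c - star c), norm_nonneg c]
    _ = 4 * ‖c‖ ^ 2 := by ring
    _ ≤ 4 * ((star u ⬝ᵥ u).re * (star v ⬝ᵥ v).re) := by nlinarith
    _ = (2 * (star u ⬝ᵥ u).re) * (2 * (star v ⬝ᵥ v).re) := by ring
    _ ≤ (trace (X*X)).re * (trace (Y*Y)).re :=
        mul_le_mul hu hv (by linarith) (by linarith)

end MMURAux

/-- For the maximally mixed state, the variance product is bounded below by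
`(1/d²)|⟨ψ|[A,B]|ψ⟩|²` for every unit vector ψ. -/
theorem maximally_mixed_vec_UR {d : ℕ} (hd : 0 < d)
    (A B : Matrix (Fin d) (Fin d) ℂ)
    (hA : A.IsHermitian) (hB : B.IsHermitian)
    (ψ : Fin d → ℂ) (hψ : ∑ i, Complex.normSq (ψ i) = 1) :
    (((1 / (d : ℝ)) • (1 : Matrix (Fin d) (Fin d) ℂ) * A * A).trace.re -
        (((1 / (d : ℝ)) • (1 : Matrix (Fin d) (Fin d) ℂ) * A).trace.re) ^ 2) *
      (((1 / (d : ℝ)) • (1 : Matrix (Fin d) (Fin d) ℂ) * B * B).trace.re -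
        (((1 / (d : ℝ)) • (1 : Matrix (Fin d) (Fin d) ℂ) * B).trace.re) ^ 2) ≥
    (1 / (d : ℝ) ^ 2) *
      ‖star ψ ⬝ᵥ (A * B - B * A).mulVec ψ‖ ^ 2 := by
  have hdR : (0:ℝ) < d := by exact_mod_cast hd
  have hψ1 : star ψ ⬝ᵥ ψ = (1:ℂ) := by
    rw [dot_self_eq, hψ]; norm_num
  set a : ℝ := (trace A).re / d with hadef
  set b : ℝ := (trace B).re / d with hbdef
  set A' : Matrix (Fin d) (Fin d) ℂ := A - (a:ℂ) • 1 with hA'def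
  set B' : Matrix (Fin d) (Fin d) ℂ := B - (b:ℂ) • 1 with hB'def
  have hA'h : A'ᴴ = A' := by
    rw [hA'def, conjTranspose_sub, hA.eq, conjTranspose_smul, conjTranspose_one]
    simp [Complex.star_def, Complex.conj_ofReal]
  have hB'h : B'ᴴ = B' := by
    rw [hB'def, conjTranspose_sub, hB.eq, conjTranspose_smul, conjTranspose_one]
    simp [Complex.star_def, Complex.conj_ofReal]
  have hcomm : A' * B' - B' * A' = A * B - B * A := by
    rw [hA'def, hB'def]
    simp only [Matrix.sub_mul, Matrix.mul_sub, Matrix.smul_mul, Matrix.mul_smul,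
      one_mul, mul_one, smul_smul, smul_sub]
    module
  -- trace of A real
  have htA : trace A = ((trace A).re : ℂ) := by
    have h := trace_conjTranspose A
    rw [hA.eq] at h
    exact ((Complex.conj_eq_iff_re).mp h.symm).symm
  have htB : trace B = ((trace B).re : ℂ) := by
    have h := trace_conjTranspose B
    rw [hB.eq] at h
    exact ((Complex.conj_eq_iff_re).mp h.symm).symm
  -- trace (A'*A')
  have htA' : trace (A' * A') = trace (A*A) - (2*(a:ℂ)) * trace A + (a:ℂ)^2 * d := by
    rw [hA'def]
    simp only [Matrix.sub_mul, Matrix.mul_sub, Matrix.smul_mul, Matrix.mul_smul,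
      one_mul, mul_one, smul_smul, trace_sub, trace_add, trace_smul, trace_one]
    simp [smul_eq_mul]
    ring
  have htB' : trace (B' * B') = trace (B*B) - (2*(b:ℂ)) * trace B + (b:ℂ)^2 * d := by
    rw [hB'def]
    simp only [Matrix.sub_mul, Matrix.mul_sub, Matrix.smul_mul, Matrix.mul_smul,
      one_mul, mul_one, smul_smul, trace_sub, trace_add, trace_smul, trace_one]
    simp [smul_eq_mul]
    ring
  have hreA : (trace (A' * A')).re = (trace (A*A)).re - (trace A).re^2 / d := by
    rw [htA']
    rw [htA]
    rw [hadef]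
    simp only [Complex.sub_re, Complex.add_re]
    norm_cast
    field_simp
    ring
  have hreB : (trace (B' * B')).re = (trace (B*B)).re - (trace B).re^2 / d := by
    rw [htB']
    rw [htB]
    rw [hbdef]
    simp only [Complex.sub_re, Complex.add_re]
    norm_cast
    field_simp
    ring
  have key := comm_bound ψ hψ1 A' B' hA'h hB'h
  rw [hcomm] at key
  -- simplify the LHS of the goal
  have hLA : ((1 / (d : ℝ)) • (1 : Matrix (Fin d) (Fin d) ℂ) * A * A).trace.re
      = (1/(d:ℝ)) * (trace (A*A)).re := by
    rw [Matrix.smul_mul, Matrix.smul_mul, one_mul, trace_smul]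
    simp [Complex.real_smul]
  have hLA1 : ((1 / (d : ℝ)) • (1 : Matrix (Fin d) (Fin d) ℂ) * A).trace.re
      = (1/(d:ℝ)) * (trace A).re := by
    rw [Matrix.smul_mul, one_mul, trace_smul]
    simp [Complex.real_smul]
  have hLB : ((1 / (d : ℝ)) • (1 : Matrix (Fin d) (Fin d) ℂ) * B * B).trace.re
      = (1/(d:ℝ)) * (trace (B*B)).re := by
    rw [Matrix.smul_mul, Matrix.smul_mul, one_mul, trace_smul]
    simp [Complex.real_smul]
  have hLB1 : ((1 / (d : ℝ)) • (1 : Matrix (Fin d) (Fin d) ℂ) * B).trace.re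
      = (1/(d:ℝ)) * (trace B).re := by
    rw [Matrix.smul_mul, one_mul, trace_smul]
    simp [Complex.real_smul]
  rw [ge_iff_le, hLA, hLA1, hLB, hLB1]
  have hfactA : (1/(d:ℝ)) * (trace (A*A)).re - ((1/(d:ℝ)) * (trace A).re)^2
      = (1/(d:ℝ)) * (trace (A' * A')).re := by
    rw [hreA]; field_simp
  have hfactB : (1/(d:ℝ)) * (trace (B*B)).re - ((1/(d:ℝ)) * (trace B).re)^2
      = (1/(d:ℝ)) * (trace (B' * B')).re := by
    rw [hreB]; field_simp
  rw [hfactA, hfactB]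
  have : (1/(d:ℝ)) * (trace (A' * A')).re * ((1/(d:ℝ)) * (trace (B' * B')).re)
      = (1/(d:ℝ)^2) * ((trace (A' * A')).re * (trace (B' * B')).re) := by ring
  rw [this]
  apply mul_le_mul_of_nonneg_left key
  positivity
end

section
/- Let ρ be a faithful density matrix, not maximally mixed, with extreme eigenvalues λ_min, λ_max. For any Hermitian A, B: V_ρ(A)·V_ρ(B) ≥ ((λ_max + λ_min)²/(4(λ_max − λ_min)²))·|⟨[A,B]⟩_ρ|² + Cov_ρ(A,B)² (generalized Schrödinger relation). -/
/-!
For `m • 1 ≤ ρ ≤ M • 1` with `0 ≤ m`, the form `Ψ(X, Y) = M Tr(ρ Xᴴ Y) - m Tr(ρ Y Xᴴ)` is positive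
semidefinite, because `Tr(ρ Xᴴ X) ≥ m Tr(Xᴴ X)` and `Tr(ρ X Xᴴ) ≤ M Tr(Xᴴ X)`. For Hermitian `X, Y`
and `z = Tr(ρ X Y)` it takes the value `Ψ(X, Y) = M z - m z̄`, of squared modulus
`(M - m)² (Re z)² + (M + m)² (Im z)²`, and `Ψ(X, X) = (M - m) Tr(ρ X²)`. Cauchy–Schwarz for `Ψ`
applied to the centered observables `A - ⟨A⟩_ρ`, `B - ⟨B⟩_ρ` is the claim: there `Re z` is the
covariance and `2 i Im z` is the expectation of the commutator.
-/

open Matrix ComplexOrder ComplexConjugate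
open scoped MatrixOrder

theorem Complex.norm_sub_conj_sq (z : ℂ) : ‖z - conj z‖ ^ 2 = 4 * z.im ^ 2 := by
  rw [Complex.sq_norm, Complex.normSq_apply]
  simp only [Complex.sub_re, Complex.sub_im, Complex.conj_re, Complex.conj_im]
  ring

theorem Complex.norm_ofReal_mul_sub_ofReal_mul_conj_sq (a b : ℝ) (z : ℂ) :
    ‖a * z - b * conj z‖ ^ 2 = (a - b) ^ 2 * z.re ^ 2 + (a + b) ^ 2 * z.im ^ 2 := by
  rw [Complex.sq_norm, Complex.normSq_apply]
  simp only [Complex.sub_re, Complex.sub_im, Complex.re_ofReal_mul, Complex.im_ofReal_mul,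
    Complex.conj_re, Complex.conj_im]
  ring

namespace Matrix

variable {n : Type*} [Fintype n]

theorem conj_trace_mul_mul_of_isHermitian {ρ X Y : Matrix n n ℂ} (hρ : ρ.IsHermitian)
    (hX : X.IsHermitian) (hY : Y.IsHermitian) : conj (ρ * X * Y).trace = (ρ * Y * X).trace := by
  rw [← Complex.star_def, ← trace_conjTranspose, conjTranspose_mul, conjTranspose_mul, hρ.eq,
    hX.eq, hY.eq, ← Matrix.mul_assoc, trace_mul_cycle]

theorem re_trace_mul_conjTranspose_mul_le_of_posSemidef_sub {ρ σ : Matrix n n ℂ}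
    (h : (ρ - σ).PosSemidef) (X : Matrix n n ℂ) :
    (σ * Xᴴ * X).trace.re ≤ (ρ * Xᴴ * X).trace.re := by
  have := (RCLike.nonneg_iff.mp (h.mul_mul_conjTranspose_same X).trace_nonneg).1
  rw [Matrix.mul_sub, Matrix.sub_mul, trace_sub, trace_mul_cycle, trace_mul_cycle X σ] at this
  simpa [sub_nonneg, trace_mul_cycle (C := σ), trace_mul_cycle (C := ρ)] using this

def sandwichForm (ρ : Matrix n n ℂ) (m M : ℝ) (X Y : Matrix n n ℂ) : ℂ :=
  M * (ρ * Xᴴ * Y).trace - m * (ρ * Y * Xᴴ).trace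

theorem conj_sandwichForm {ρ : Matrix n n ℂ} (hρ : ρ.IsHermitian) (m M : ℝ)
    (X Y : Matrix n n ℂ) : conj (sandwichForm ρ m M Y X) = sandwichForm ρ m M X Y := by
  simp only [sandwichForm, map_sub, map_mul, Complex.conj_ofReal, ← Complex.star_def,
    ← trace_conjTranspose, conjTranspose_mul, conjTranspose_conjTranspose, hρ.eq]
  rw [← Matrix.mul_assoc, ← Matrix.mul_assoc, trace_mul_cycle Xᴴ, trace_mul_cycle Y]

theorem sandwichForm_of_isHermitian {ρ X Y : Matrix n n ℂ} (hρ : ρ.IsHermitian)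
    (hX : X.IsHermitian) (hY : Y.IsHermitian) (m M : ℝ) :
    sandwichForm ρ m M X Y = M * (ρ * X * Y).trace - m * conj (ρ * X * Y).trace := by
  rw [sandwichForm, hX.eq, conj_trace_mul_mul_of_isHermitian hρ hX hY]

variable [DecidableEq n]

theorem conj_trace_mul_of_isHermitian {ρ X : Matrix n n ℂ} (hρ : ρ.IsHermitian)
    (hX : X.IsHermitian) : conj (ρ * X).trace = (ρ * X).trace := by
  simpa using conj_trace_mul_mul_of_isHermitian hρ hX isHermitian_one

theorem im_trace_mul_of_isHermitian {ρ A : Matrix n n ℂ} (hρ : ρ.IsHermitian)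
    (hA : A.IsHermitian) : (ρ * A).trace.im = 0 :=
  Complex.conj_eq_iff_im.mp (conj_trace_mul_of_isHermitian hρ hA)

theorem re_sandwichForm_self_nonneg {ρ : Matrix n n ℂ} {m M : ℝ} (hm : 0 ≤ m) (hM : 0 ≤ M)
    (hmρ : (ρ - (m : ℂ) • 1).PosSemidef) (hρM : ((M : ℂ) • 1 - ρ).PosSemidef)
    (X : Matrix n n ℂ) : 0 ≤ (sandwichForm ρ m M X X).re := by
  have hlow := re_trace_mul_conjTranspose_mul_le_of_posSemidef_sub hmρ X
  have hupp := re_trace_mul_conjTranspose_mul_le_of_posSemidef_sub hρM Xᴴ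
  simp only [conjTranspose_conjTranspose, smul_mul, one_mul, trace_smul, smul_eq_mul,
    Complex.re_ofReal_mul] at hlow hupp
  rw [trace_mul_comm X] at hupp
  simp only [sandwichForm, Complex.sub_re, Complex.re_ofReal_mul]
  nlinarith [mul_le_mul_of_nonneg_left hlow hM, mul_le_mul_of_nonneg_left hupp hm]

abbrev sandwichCore {ρ : Matrix n n ℂ} (hρ : ρ.IsHermitian) {m M : ℝ} (hm : 0 ≤ m) (hM : 0 ≤ M)
    (hmρ : (ρ - (m : ℂ) • 1).PosSemidef) (hρM : ((M : ℂ) • 1 - ρ).PosSemidef) :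
    PreInnerProductSpace.Core ℂ (Matrix n n ℂ) where
  inner := sandwichForm ρ m M
  conj_inner_symm := conj_sandwichForm hρ m M
  re_inner_nonneg := re_sandwichForm_self_nonneg hm hM hmρ hρM
  add_left X Y Z := by
    simp only [sandwichForm, conjTranspose_add, Matrix.mul_add, Matrix.add_mul, trace_add]
    ring
  smul_left X Y c := by
    simp only [sandwichForm, conjTranspose_smul, Matrix.mul_smul, Matrix.smul_mul, trace_smul,
      smul_eq_mul, Complex.star_def]
    ring

theorem norm_sandwichForm_sq_le {ρ : Matrix n n ℂ} (hρ : ρ.IsHermitian) {m M : ℝ} (hm : 0 ≤ m)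
    (hM : 0 ≤ M) (hmρ : (ρ - (m : ℂ) • 1).PosSemidef) (hρM : ((M : ℂ) • 1 - ρ).PosSemidef)
    (X Y : Matrix n n ℂ) :
    ‖sandwichForm ρ m M X Y‖ ^ 2 ≤ (sandwichForm ρ m M X X).re * (sandwichForm ρ m M Y Y).re := by
  have : ‖sandwichForm ρ m M X Y‖ * ‖sandwichForm ρ m M Y X‖ ≤
      (sandwichForm ρ m M X X).re * (sandwichForm ρ m M Y Y).re :=
    InnerProductSpace.Core.inner_mul_inner_self_le (c := sandwichCore hρ hm hM hmρ hρM) X Y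
  rwa [← Complex.norm_conj (sandwichForm ρ m M Y X), conj_sandwichForm hρ, ← sq] at this

theorem schroedinger_of_isHermitian {ρ X Y : Matrix n n ℂ} (hρ : ρ.IsHermitian)
    (hX : X.IsHermitian) (hY : Y.IsHermitian) {m M : ℝ} (hm : 0 ≤ m) (hmM : m < M)
    (hmρ : (ρ - (m : ℂ) • 1).PosSemidef) (hρM : ((M : ℂ) • 1 - ρ).PosSemidef) :
    ((M + m) ^ 2 / (4 * (M - m) ^ 2)) * ‖(ρ * (X * Y - Y * X)).trace‖ ^ 2 +
      (ρ * X * Y).trace.re ^ 2 ≤ (ρ * X * X).trace.re * (ρ * Y * Y).trace.re := by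
  have hcomm : (ρ * (X * Y - Y * X)).trace = (ρ * X * Y).trace - conj (ρ * X * Y).trace := by
    rw [Matrix.mul_sub, trace_sub, ← Matrix.mul_assoc, ← Matrix.mul_assoc,
      conj_trace_mul_mul_of_isHermitian hρ hX hY]
  have hCS := norm_sandwichForm_sq_le hρ hm (hm.trans hmM.le) hmρ hρM X Y
  simp only [sandwichForm_of_isHermitian hρ hX hY, sandwichForm_of_isHermitian hρ hX hX,
    sandwichForm_of_isHermitian hρ hY hY, Complex.norm_ofReal_mul_sub_ofReal_mul_conj_sq,
    Complex.sub_re, Complex.re_ofReal_mul, Complex.conj_re] at hCS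
  have hgap : M - m ≠ 0 := by linarith
  rw [hcomm, Complex.norm_sub_conj_sq, ← mul_le_mul_iff_right₀ (by positivity : 0 < (M - m) ^ 2)]
  calc (M - m) ^ 2 * ((M + m) ^ 2 / (4 * (M - m) ^ 2) * (4 * (ρ * X * Y).trace.im ^ 2) +
        (ρ * X * Y).trace.re ^ 2)
      = (M - m) ^ 2 * (ρ * X * Y).trace.re ^ 2 + (M + m) ^ 2 * (ρ * X * Y).trace.im ^ 2 := by
        field_simp
        ring
    _ ≤ _ := by linarith

theorem IsHermitian.posSemidef_sub_smul_one {A : Matrix n n ℂ} (hA : A.IsHermitian) {c : ℝ}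
    (h : ∀ i, c ≤ hA.eigenvalues i) : (A - (c : ℂ) • 1).PosSemidef := by
  have : algebraMap ℝ (Matrix n n ℂ) c ≤ A := by
    rw [algebraMap_le_iff_le_spectrum hA.isSelfAdjoint, hA.spectrum_real_eq_range_eigenvalues]
    rintro _ ⟨i, rfl⟩
    exact h i
  rwa [Matrix.le_iff, Algebra.algebraMap_eq_smul_one, ← Complex.coe_smul] at this

theorem IsHermitian.posSemidef_smul_one_sub {A : Matrix n n ℂ} (hA : A.IsHermitian) {c : ℝ}
    (h : ∀ i, hA.eigenvalues i ≤ c) : ((c : ℂ) • 1 - A).PosSemidef := by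
  have : A ≤ algebraMap ℝ (Matrix n n ℂ) c := by
    rw [le_algebraMap_iff_spectrum_le hA.isSelfAdjoint, hA.spectrum_real_eq_range_eigenvalues]
    rintro _ ⟨i, rfl⟩
    exact h i
  rwa [Matrix.le_iff, Algebra.algebraMap_eq_smul_one, ← Complex.coe_smul] at this

def centered (ρ A : Matrix n n ℂ) : Matrix n n ℂ := A - (ρ * A).trace • 1

theorem isHermitian_centered {ρ A : Matrix n n ℂ} (hρ : ρ.IsHermitian) (hA : A.IsHermitian) :
    (centered ρ A).IsHermitian :=
  hA.sub (isHermitian_one.smul (conj_trace_mul_of_isHermitian hρ hA))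

theorem centered_mul_centered_sub (ρ A B : Matrix n n ℂ) :
    centered ρ A * centered ρ B - centered ρ B * centered ρ A = A * B - B * A := by
  simp only [centered, Matrix.mul_sub, Matrix.sub_mul, Matrix.mul_smul, Matrix.smul_mul,
    Matrix.mul_one, Matrix.one_mul]
  module

theorem trace_mul_centered_mul_centered {ρ : Matrix n n ℂ} (hρ : ρ.trace = 1)
    (A B : Matrix n n ℂ) :
    (ρ * centered ρ A * centered ρ B).trace =
      (ρ * A * B).trace - (ρ * A).trace * (ρ * B).trace := by
  simp only [centered, Matrix.mul_sub, Matrix.sub_mul, Matrix.mul_smul, Matrix.smul_mul,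
    Matrix.mul_one, trace_sub, trace_smul, smul_eq_mul, hρ]
  ring

theorem re_trace_mul_centered_mul_centered {ρ A B : Matrix n n ℂ} (hρtr : ρ.trace = 1)
    (hρ : ρ.IsHermitian) (hA : A.IsHermitian) (hB : B.IsHermitian) :
    (ρ * centered ρ A * centered ρ B).trace.re =
      (1 / 2) * (ρ * (A * B + B * A)).trace.re - (ρ * A).trace.re * (ρ * B).trace.re := by
  have hswap : (ρ * B * A).trace.re = (ρ * A * B).trace.re := by
    rw [← conj_trace_mul_mul_of_isHermitian hρ hA hB, Complex.conj_re]
  rw [trace_mul_centered_mul_centered hρtr, Matrix.mul_add, trace_add, ← Matrix.mul_assoc,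
    ← Matrix.mul_assoc, Complex.add_re, hswap, Complex.sub_re, Complex.mul_re,
    im_trace_mul_of_isHermitian hρ hA]
  ring

theorem re_trace_mul_centered_mul_self {ρ A : Matrix n n ℂ} (hρtr : ρ.trace = 1)
    (hρ : ρ.IsHermitian) (hA : A.IsHermitian) :
    (ρ * centered ρ A * centered ρ A).trace.re =
      (ρ * A * A).trace.re - (ρ * A).trace.re ^ 2 := by
  rw [re_trace_mul_centered_mul_centered hρtr hρ hA hA, Matrix.mul_add, trace_add, Complex.add_re,
    ← Matrix.mul_assoc]
  ring

end Matrix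

/-- Generalized Schrödinger uncertainty relation for faithful,
non-maximally-mixed states. -/
theorem gen_schroedinger {n : ℕ} (ρ A B : Matrix (Fin n) (Fin n) ℂ)
    (hρ : ρ.PosDef) (hρtr : ρ.trace = 1)
    (hA : A.IsHermitian) (hB : B.IsHermitian)
    (lmin lmax : ℝ)
    (hmin : IsLeast (Set.range hρ.1.eigenvalues) lmin)
    (hmax : IsGreatest (Set.range hρ.1.eigenvalues) lmax)
    (hne : lmin < lmax) :
    ((ρ * A * A).trace.re - ((ρ * A).trace.re) ^ 2) *
      ((ρ * B * B).trace.re - ((ρ * B).trace.re) ^ 2) ≥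
    ((lmax + lmin) ^ 2 / (4 * (lmax - lmin) ^ 2)) *
      ‖(ρ * (A * B - B * A)).trace‖ ^ 2 +
    ((1 / 2) * (ρ * (A * B + B * A)).trace.re -
        (ρ * A).trace.re * (ρ * B).trace.re) ^ 2 := by
  have hlow := hρ.1.posSemidef_sub_smul_one fun i => hmin.2 ⟨i, rfl⟩
  have hupp := hρ.1.posSemidef_smul_one_sub fun i => hmax.2 ⟨i, rfl⟩
  have hlmin : 0 ≤ lmin := by
    obtain ⟨i, rfl⟩ := hmin.1
    exact (hρ.eigenvalues_pos i).le
  have key := schroedinger_of_isHermitian hρ.1 (isHermitian_centered hρ.1 hA)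
    (isHermitian_centered hρ.1 hB) hlmin hne hlow hupp
  rwa [centered_mul_centered_sub, re_trace_mul_centered_mul_centered hρtr hρ.1 hA hB,
    re_trace_mul_centered_mul_self hρtr hρ.1 hA, re_trace_mul_centered_mul_self hρtr hρ.1 hB] at key
end

section
/- The generalized Robertson relation is tight: for any diagonal density matrix ρ = diag(λ₁,…,λ_d) with 0 < λ₁ < λ_d, the Hermitian matrices A with entries A_{ij} = a(δ_{i,d}δ_{j,1} + δ_{i,1}δ_{j,d}) and B with entries B_{ij} = b(i·δ_{i,d}δ_{j,1} + i·δ_{i,1}δ_{j,d})·(−1)^{[i<j]} chosen Hermitian (b real, off-diagonal entries ±ib) satisfy V_ρ(A)·V_ρ(B) = ((λ_d + λ₁)²/(4(λ_d − λ₁)²))·|Tr(ρ[A,B])|², for any nonzero real a, b. -/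
/-!
Both observables are off-diagonal on the block spanned by `|1⟩` and `|d⟩`, so their expectations
in the diagonal state `ρ` vanish and their variances are `a²(λ₁ + λ_d)` and `b²(λ₁ + λ_d)`.
Their commutator is diagonal on that block, with `Tr(ρ[A,B]) = 2iab(λ_d − λ₁)`, so both sides
equal `a²b²(λ₁ + λ_d)²`.
-/

open Matrix

namespace Matrix

variable {n R : Type*} [DecidableEq n]

theorem diagonal_mul_single [Fintype n] [Semiring R] (f : n → R) (i j : n) (c : R) :
    diagonal f * single i j c = single i j (f i * c) := by
  ext a b
  simp only [diagonal_mul, single_apply]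
  split_ifs <;> simp_all

variable {i j : n}

theorem of_ite_symm_eq_single_add_single [AddZeroClass R] (hij : i ≠ j) (x : R) :
    (of fun k l => if (k = j ∧ l = i) ∨ (k = i ∧ l = j) then x else 0) =
      single i j x + single j i x := by
  ext k l
  by_cases hk : k = i <;> by_cases hl : l = j <;> aesop (add simp single_apply)

theorem of_ite_antisymm_eq_single_add_single [AddGroup R] (hij : i ≠ j) (x : R) :
    (of fun k l => if k = i ∧ l = j then x else if k = j ∧ l = i then -x else 0) =
      single i j x + single j i (-x) := by
  ext k l
  by_cases hk : k = i <;> by_cases hl : l = j <;> aesop (add simp single_apply)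

variable [Fintype n]

theorem single_add_single_mul_single_add_single [Semiring R] (hij : i ≠ j) (x y u v : R) :
    (single i j x + single j i y) * (single i j u + single j i v) =
      single i i (x * v) + single j j (y * u) := by
  simp [add_mul, mul_add, hij, hij.symm, add_comm]

theorem trace_diagonal_mul_single_add_single [Semiring R] (hij : i ≠ j) (f : n → R) (x y : R) :
    (diagonal f * (single i j x + single j i y)).trace = 0 := by
  simp [mul_add, diagonal_mul_single, trace_single_eq_of_ne, hij, hij.symm]

theorem trace_diagonal_mul_single_add_single_mul_self [CommSemiring R] (hij : i ≠ j)
    (f : n → R) (x y : R) :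
    (diagonal f * (single i j x + single j i y) * (single i j x + single j i y)).trace =
      (f i + f j) * (x * y) := by
  rw [mul_assoc, single_add_single_mul_single_add_single hij]
  simp only [mul_add, diagonal_mul_single, trace_add, trace_single_eq_same]
  ring

theorem trace_diagonal_mul_commutator_single_add_single [CommRing R] (hij : i ≠ j)
    (f : n → R) (x y u v : R) :
    (diagonal f * ((single i j x + single j i y) * (single i j u + single j i v) -
        (single i j u + single j i v) * (single i j x + single j i y))).trace =
      (f i - f j) * (x * v - u * y) := by
  rw [single_add_single_mul_single_add_single hij, single_add_single_mul_single_add_single hij]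
  simp only [mul_sub, mul_add, diagonal_mul_single, trace_sub, trace_add, trace_single_eq_same]
  ring

end Matrix

theorem gen_robertson_tight_general {d : ℕ} (l : Fin (d + 2) → ℝ)
    (hne : l 0 < l (Fin.last (d + 1)))
    (a b : ℝ) :
    (((Matrix.diagonal (fun i => (l i : ℂ))) *
          (Matrix.of fun i j =>
            if (i = Fin.last (d + 1) ∧ j = 0) ∨ (i = 0 ∧ j = Fin.last (d + 1))
            then (a : ℂ) else 0) *
          (Matrix.of fun i j =>
            if (i = Fin.last (d + 1) ∧ j = 0) ∨ (i = 0 ∧ j = Fin.last (d + 1))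
            then (a : ℂ) else 0)).trace.re -
        (((Matrix.diagonal (fun i => (l i : ℂ))) *
            (Matrix.of fun i j =>
              if (i = Fin.last (d + 1) ∧ j = 0) ∨ (i = 0 ∧ j = Fin.last (d + 1))
              then (a : ℂ) else 0)).trace.re) ^ 2) *
      (((Matrix.diagonal (fun i => (l i : ℂ))) *
          (Matrix.of fun i j =>
            if i = 0 ∧ j = Fin.last (d + 1) then Complex.I * (b : ℂ)
            else if i = Fin.last (d + 1) ∧ j = 0 then -(Complex.I * (b : ℂ)) else 0) *
          (Matrix.of fun i j =>
            if i = 0 ∧ j = Fin.last (d + 1) then Complex.I * (b : ℂ)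
            else if i = Fin.last (d + 1) ∧ j = 0 then -(Complex.I * (b : ℂ)) else 0)).trace.re -
        (((Matrix.diagonal (fun i => (l i : ℂ))) *
            (Matrix.of fun i j =>
              if i = 0 ∧ j = Fin.last (d + 1) then Complex.I * (b : ℂ)
              else if i = Fin.last (d + 1) ∧ j = 0 then -(Complex.I * (b : ℂ)) else 0)).trace.re) ^ 2) =
    ((l (Fin.last (d + 1)) + l 0) ^ 2 / (4 * (l (Fin.last (d + 1)) - l 0) ^ 2)) *
      norm
        (((Matrix.diagonal (fun i => (l i : ℂ))) *
          ((Matrix.of fun i j =>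
              if (i = Fin.last (d + 1) ∧ j = 0) ∨ (i = 0 ∧ j = Fin.last (d + 1))
              then (a : ℂ) else 0) *
            (Matrix.of fun i j =>
              if i = 0 ∧ j = Fin.last (d + 1) then Complex.I * (b : ℂ)
              else if i = Fin.last (d + 1) ∧ j = 0 then -(Complex.I * (b : ℂ)) else 0) -
           (Matrix.of fun i j =>
              if i = 0 ∧ j = Fin.last (d + 1) then Complex.I * (b : ℂ)
              else if i = Fin.last (d + 1) ∧ j = 0 then -(Complex.I * (b : ℂ)) else 0) *
            (Matrix.of fun i j =>
              if (i = Fin.last (d + 1) ∧ j = 0) ∨ (i = 0 ∧ j = Fin.last (d + 1))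
              then (a : ℂ) else 0))).trace) ^ 2 := by
  have h0 : (0 : Fin (d + 2)) ≠ Fin.last (d + 1) := Fin.last_pos'.ne
  rw [of_ite_symm_eq_single_add_single h0, of_ite_antisymm_eq_single_add_single h0,
    trace_diagonal_mul_single_add_single_mul_self h0,
    trace_diagonal_mul_single_add_single_mul_self h0, trace_diagonal_mul_single_add_single h0,
    trace_diagonal_mul_single_add_single h0, trace_diagonal_mul_commutator_single_add_single h0]
  set lmin := l 0
  set lmax := l (Fin.last (d + 1))
  have hvarA : ((lmin : ℂ) + lmax) * (a * a) = ((lmin + lmax) * a ^ 2 : ℝ) := by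
    push_cast
    ring
  have hvarB : ((lmin : ℂ) + lmax) * (Complex.I * b * -(Complex.I * b)) =
      ((lmin + lmax) * b ^ 2 : ℝ) := by
    push_cast
    linear_combination (-(lmin : ℂ) - lmax) * b ^ 2 * Complex.I_sq
  have hcomm : ((lmin : ℂ) - lmax) * (a * -(Complex.I * b) - Complex.I * b * a) =
      ((2 * a * b * (lmax - lmin) : ℝ) : ℂ) * Complex.I := by
    push_cast
    ring
  rw [hvarA, hvarB, hcomm, Complex.ofReal_re, Complex.ofReal_re, Complex.zero_re, norm_mul,
    Complex.norm_I, Complex.norm_real, mul_one, Real.norm_eq_abs, sq_abs]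
  have hgap : lmax - lmin ≠ 0 := sub_ne_zero.mpr hne.ne'
  field_simp
  ring

/-- Tightness of the generalized Robertson relation: the specific observables
`A = a(|d⟩⟨1| + |1⟩⟨d|)` and `B = ib(|1⟩⟨d| − |d⟩⟨1|)` attain equality. -/
theorem gen_robertson_tight {d : ℕ} (l : Fin (d + 2) → ℝ)
    (hmono : Monotone l) (hpos : 0 < l 0) (hne : l 0 < l (Fin.last (d + 1)))
    (hsum : ∑ i, l i = 1) (a b : ℝ) (ha : a ≠ 0) (hb : b ≠ 0) :
    (((Matrix.diagonal (fun i => (l i : ℂ))) *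
          (Matrix.of fun i j =>
            if (i = Fin.last (d + 1) ∧ j = 0) ∨ (i = 0 ∧ j = Fin.last (d + 1))
            then (a : ℂ) else 0) *
          (Matrix.of fun i j =>
            if (i = Fin.last (d + 1) ∧ j = 0) ∨ (i = 0 ∧ j = Fin.last (d + 1))
            then (a : ℂ) else 0)).trace.re -
        (((Matrix.diagonal (fun i => (l i : ℂ))) *
            (Matrix.of fun i j =>
              if (i = Fin.last (d + 1) ∧ j = 0) ∨ (i = 0 ∧ j = Fin.last (d + 1))
              then (a : ℂ) else 0)).trace.re) ^ 2) *
      (((Matrix.diagonal (fun i => (l i : ℂ))) *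
          (Matrix.of fun i j =>
            if i = 0 ∧ j = Fin.last (d + 1) then Complex.I * (b : ℂ)
            else if i = Fin.last (d + 1) ∧ j = 0 then -(Complex.I * (b : ℂ)) else 0) *
          (Matrix.of fun i j =>
            if i = 0 ∧ j = Fin.last (d + 1) then Complex.I * (b : ℂ)
            else if i = Fin.last (d + 1) ∧ j = 0 then -(Complex.I * (b : ℂ)) else 0)).trace.re -
        (((Matrix.diagonal (fun i => (l i : ℂ))) *
            (Matrix.of fun i j =>
              if i = 0 ∧ j = Fin.last (d + 1) then Complex.I * (b : ℂ)
              else if i = Fin.last (d + 1) ∧ j = 0 then -(Complex.I * (b : ℂ)) else 0)).trace.re) ^ 2) =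
    ((l (Fin.last (d + 1)) + l 0) ^ 2 / (4 * (l (Fin.last (d + 1)) - l 0) ^ 2)) *
      norm
        (((Matrix.diagonal (fun i => (l i : ℂ))) *
          ((Matrix.of fun i j =>
              if (i = Fin.last (d + 1) ∧ j = 0) ∨ (i = 0 ∧ j = Fin.last (d + 1))
              then (a : ℂ) else 0) *
            (Matrix.of fun i j =>
              if i = 0 ∧ j = Fin.last (d + 1) then Complex.I * (b : ℂ)
              else if i = Fin.last (d + 1) ∧ j = 0 then -(Complex.I * (b : ℂ)) else 0) -
           (Matrix.of fun i j =>
              if i = 0 ∧ j = Fin.last (d + 1) then Complex.I * (b : ℂ)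
              else if i = Fin.last (d + 1) ∧ j = 0 then -(Complex.I * (b : ℂ)) else 0) *
            (Matrix.of fun i j =>
              if (i = Fin.last (d + 1) ∧ j = 0) ∨ (i = 0 ∧ j = Fin.last (d + 1))
              then (a : ℂ) else 0))).trace) ^ 2 :=
  gen_robertson_tight_general l hne a b
end

section
/- For a qubit state ρ with purity P = Tr(ρ²) and Pauli observables A = a·σ, B = b·σ with unit vectors a, b ∈ ℝ³, the average over uniformly random unit vectors a, b of (1/4)|Tr(ρ[A,B])|² equals (2/9)(2P − 1). -/
/-!
Writing `rᵢ = Tr(ρ σᵢ)` for the Bloch vector of `ρ`, the identity `[a·σ, b·σ] = 2i (a × b)·σ`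
turns the integrand into `⟪r, a × b⟫² = ⟪r × a, b⟫²`. On the unit sphere of an `n`-dimensional
space, every finite nonzero isometry-invariant measure averages `⟪v, x⟫²` to `‖v‖² / n`: reflections show
that the integral only depends on `‖v‖`, and summing over an orthonormal basis gives the total mass.
Averaging over `b`, then over `a` with `‖r × a‖² = ‖r‖² - ⟪r, a⟫²`, gives `(2/9) ‖r‖²`, and
`‖r‖² = 2 Tr ρ² - 1`. The average is meaningful because `0 < μH[2] S² < ∞`: the sphere is the
Lipschitz image of a rectangle under spherical coordinates, and it projects onto a disc.
-/

open Matrix MeasureTheory ComplexOrder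

noncomputable def pauli : Fin 3 → Matrix (Fin 2) (Fin 2) ℂ :=
  ![!![0, 1; 1, 0], !![0, -Complex.I; Complex.I, 0], !![1, 0; 0, -1]]

/-- A Pauli observable `a · σ` for a direction vector `a ∈ ℝ³`. -/
noncomputable def pauliObs (a : EuclideanSpace ℝ (Fin 3)) : Matrix (Fin 2) (Fin 2) ℂ :=
  ∑ i, (a i : ℂ) • pauli i

open Metric WithLp
open scoped RealInnerProductSpace

theorem setIntegral_sphere_comp_linearIsometryEquiv {E F : Type*} [NormedAddCommGroup E]
    [NormedSpace ℝ E] [MeasurableSpace E] [BorelSpace E] [NormedAddCommGroup F] [NormedSpace ℝ F]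
    {d : ℝ} (f : E ≃ₗᵢ[ℝ] E) (g : E → F) (r : ℝ) :
    ∫ x in sphere 0 r, g (f x) ∂μH[d] = ∫ x in sphere 0 r, g x ∂μH[d] := by
  have hpre : f ⁻¹' sphere 0 r = sphere 0 r := by ext x; simp
  conv_lhs => rw [← hpre]
  exact (f.toIsometryEquiv.measurePreserving_hausdorffMeasure d).setIntegral_preimage_emb
    f.toHomeomorph.measurableEmbedding g _

section SphereIntegrals

variable {E : Type*} [NormedAddCommGroup E] [InnerProductSpace ℝ E] [MeasurableSpace E]
  [BorelSpace E] {d : ℝ}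

theorem integral_inner_sq_sphere_eq_of_norm_eq {u w : E} (h : ‖u‖ = ‖w‖) :
    ∫ x in sphere 0 1, ⟪u, x⟫ ^ 2 ∂μH[d] = ∫ x in sphere 0 1, ⟪w, x⟫ ^ 2 ∂μH[d] := by
  set f := Submodule.reflection (ℝ ∙ (u - w))ᗮ
  have hfu : f u = w := Submodule.reflection_sub h
  conv_lhs => enter [2, x]; rw [← f.inner_map_map, hfu]
  exact setIntegral_sphere_comp_linearIsometryEquiv f (fun x => ⟪w, x⟫ ^ 2) 1

theorem integral_inner_sq_sphere_smul (c : ℝ) (u : E) :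
    ∫ x in sphere 0 1, ⟪c • u, x⟫ ^ 2 ∂μH[d] = c ^ 2 * ∫ x in sphere 0 1, ⟪u, x⟫ ^ 2 ∂μH[d] := by
  simp_rw [real_inner_smul_left, mul_pow, integral_const_mul]

variable [FiniteDimensional ℝ E]

theorem integrableOn_inner_sq_sphere (h : μH[d] (sphere (0 : E) 1) ≠ ⊤) (v : E) :
    IntegrableOn (fun x => ⟪v, x⟫ ^ 2) (sphere 0 1) μH[d] :=
  ((continuous_const.inner continuous_id).pow 2).continuousOn.integrableOn_of_subset_isCompact
    (isCompact_sphere 0 1) isClosed_sphere.measurableSet subset_rfl h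

theorem sum_integral_inner_sq_sphere {ι : Type*} [Fintype ι] (b : OrthonormalBasis ι ℝ E)
    (h : μH[d] (sphere (0 : E) 1) ≠ ⊤) :
    ∑ i, ∫ x in sphere 0 1, ⟪b i, x⟫ ^ 2 ∂μH[d] = μH[d].real (sphere (0 : E) 1) := by
  rw [← integral_finsetSum _ fun i _ => integrableOn_inner_sq_sphere h (b i),
    setIntegral_congr_fun isClosed_sphere.measurableSet (g := fun _ => (1 : ℝ)),
    setIntegral_const, smul_eq_mul, mul_one]
  intro x hx
  simp [b.sum_sq_inner_right, mem_sphere_zero_iff_norm.mp hx]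

theorem integral_inner_sq_sphere (h : μH[d] (sphere (0 : E) 1) ≠ ⊤) (v : E) :
    ∫ x in sphere 0 1, ⟪v, x⟫ ^ 2 ∂μH[d] =
      μH[d].real (sphere (0 : E) 1) / Module.finrank ℝ E * ‖v‖ ^ 2 := by
  rcases eq_or_ne v 0 with rfl | hv
  · simp
  have : Nontrivial E := nontrivial_of_ne v 0 hv
  set b := stdOrthonormalBasis ℝ E
  have hv_eq (i) : ∫ x in sphere 0 1, ⟪v, x⟫ ^ 2 ∂μH[d] =
      ‖v‖ ^ 2 * ∫ x in sphere 0 1, ⟪b i, x⟫ ^ 2 ∂μH[d] := by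
    rw [← integral_inner_sq_sphere_smul, integral_inner_sq_sphere_eq_of_norm_eq]
    simp [norm_smul, b.orthonormal.1 i]
  have hn : (Module.finrank ℝ E : ℝ) ≠ 0 := by exact_mod_cast Module.finrank_pos.ne'
  have hmul : (Module.finrank ℝ E : ℝ) * ∫ x in sphere 0 1, ⟪v, x⟫ ^ 2 ∂μH[d] =
      μH[d].real (sphere (0 : E) 1) * ‖v‖ ^ 2 := by
    calc (Module.finrank ℝ E : ℝ) * ∫ x in sphere 0 1, ⟪v, x⟫ ^ 2 ∂μH[d]
        = ∑ i, ‖v‖ ^ 2 * ∫ x in sphere 0 1, ⟪b i, x⟫ ^ 2 ∂μH[d] := by simp [← hv_eq]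
      _ = μH[d].real (sphere (0 : E) 1) * ‖v‖ ^ 2 := by
          rw [← Finset.mul_sum, sum_integral_inner_sq_sphere b h, mul_comm]
  field_simp
  linarith

theorem setAverage_inner_sq_sphere (h₀ : μH[d] (sphere (0 : E) 1) ≠ 0)
    (h : μH[d] (sphere (0 : E) 1) ≠ ⊤) (v : E) :
    ⨍ x in sphere 0 1, ⟪v, x⟫ ^ 2 ∂μH[d] = ‖v‖ ^ 2 / Module.finrank ℝ E := by
  rw [setAverage_eq, integral_inner_sq_sphere h, smul_eq_mul, measureReal_def]
  have : (μH[d] (sphere (0 : E) 1)).toReal ≠ 0 := ENNReal.toReal_ne_zero.mpr ⟨h₀, h⟩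
  field_simp

end SphereIntegrals

theorem setAverage_div_const {α : Type*} [MeasurableSpace α] (μ : Measure α) (s : Set α)
    (f : α → ℝ) (c : ℝ) : ⨍ x in s, f x / c ∂μ = (⨍ x in s, f x ∂μ) / c := by
  simp only [setAverage_eq, integral_div, smul_eq_mul, mul_div_assoc]

local notation "ℝ³" => EuclideanSpace ℝ (Fin 3)

section HausdorffMeasureSphere

open Real

lemma hausdorffMeasure_two_pi_real : (μH[2] : Measure (Fin 2 → ℝ)) = volume := by
  simpa using hausdorffMeasure_pi_real (ι := Fin 2)

noncomputable def sphericalCoords (x : Fin 2 → ℝ) : ℝ³ :=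
  toLp 2 ![sin (x 0) * cos (x 1), sin (x 0) * sin (x 1), cos (x 0)]

lemma contDiff_sphericalCoords : ContDiff ℝ 1 sphericalCoords := by
  refine PiLp.contDiff_toLp.comp (contDiff_pi.2 fun i => ?_)
  fin_cases i <;> dsimp only [Fin.reduceFinMk, cons_val] <;> fun_prop

lemma sphere_subset_image_sphericalCoords :
    sphere (0 : ℝ³) 1 ⊆ sphericalCoords '' Set.Icc ![0, -π] ![π, π] := by
  intro x hx
  have hx1 : x 0 ^ 2 + x 1 ^ 2 + x 2 ^ 2 = 1 := by
    rw [← Fin.sum_univ_three (fun i => x i ^ 2), ← EuclideanSpace.real_norm_sq_eq,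
      mem_sphere_zero_iff_norm.mp hx, one_pow]
  set z : ℂ := ⟨x 0, x 1⟩
  have hz : ‖z‖ = √(1 - x 2 ^ 2) := by
    rw [Complex.norm_def, Complex.normSq_apply]; congr 1; simp only [z]; linear_combination hx1
  have hx2 : |x 2| ≤ 1 := by
    rw [← sq_le_one_iff_abs_le_one]; nlinarith
  refine ⟨![arccos (x 2), Complex.arg z], ⟨?_, ?_⟩, ?_⟩
  · intro i; fin_cases i
    · simpa using arccos_nonneg _
    · simpa using (Complex.neg_pi_lt_arg z).le
  · intro i; fin_cases i
    · simpa using arccos_le_pi _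
    · simpa using Complex.arg_le_pi z
  · ext i
    fin_cases i
    · simpa [sphericalCoords, sin_arccos, hz, z] using Complex.norm_mul_cos_arg z
    · simpa [sphericalCoords, sin_arccos, hz, z] using Complex.norm_mul_sin_arg z
    · simp [sphericalCoords, cos_arccos (abs_le.1 hx2).1 (abs_le.1 hx2).2]

lemma hausdorffMeasure_sphere_lt_top : μH[2] (sphere (0 : ℝ³) 1) < ⊤ := by
  obtain ⟨K, hK⟩ := contDiff_sphericalCoords.contDiffOn.exists_lipschitzOnWith one_ne_zero
    (convex_Icc ![0, -π] ![π, π]) isCompact_Icc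
  calc μH[2] (sphere (0 : ℝ³) 1)
      ≤ μH[2] (sphericalCoords '' Set.Icc ![0, -π] ![π, π]) :=
        measure_mono sphere_subset_image_sphericalCoords
    _ ≤ (K : ENNReal) ^ (2 : ℝ) * μH[2] (Set.Icc ![0, -π] ![π, π]) :=
        hK.hausdorffMeasure_image_le zero_le_two
    _ < ⊤ := by
        rw [hausdorffMeasure_two_pi_real]
        exact ENNReal.mul_lt_top (by simp) isCompact_Icc.measure_lt_top

def projFstTwo (x : ℝ³) : Fin 2 → ℝ := fun i => x i.castSucc

lemma lipschitzWith_projFstTwo : LipschitzWith 1 projFstTwo :=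
  LipschitzWith.of_dist_le_mul fun x y => by
    simpa [dist_pi_le_iff dist_nonneg, projFstTwo] using
      fun i : Fin 2 => PiLp.dist_apply_le x y i.castSucc

lemma ball_subset_image_projFstTwo : ball (0 : Fin 2 → ℝ) (1 / 2) ⊆ projFstTwo '' sphere 0 1 := by
  intro u hu
  have hu' : ∀ i, |u i| < 1 / 2 := by simpa [mem_ball_zero_iff, pi_norm_lt_iff] using hu
  have hsq : u 0 ^ 2 + u 1 ^ 2 ≤ 1 := by
    have := hu' 0; have := hu' 1
    nlinarith [sq_abs (u 0), sq_abs (u 1), abs_nonneg (u 0), abs_nonneg (u 1)]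
  refine ⟨toLp 2 ![u 0, u 1, √(1 - (u 0 ^ 2 + u 1 ^ 2))], ?_, ?_⟩
  · rw [mem_sphere_zero_iff_norm, ← pow_eq_one_iff_of_nonneg (norm_nonneg _) two_ne_zero,
      EuclideanSpace.real_norm_sq_eq]
    simp [Fin.sum_univ_three, Real.sq_sqrt (sub_nonneg.2 hsq)]
  · ext i; fin_cases i <;> simp [projFstTwo]

lemma hausdorffMeasure_sphere_pos : 0 < μH[2] (sphere (0 : ℝ³) 1) := by
  calc (0 : ENNReal) < μH[2] (ball (0 : Fin 2 → ℝ) (1 / 2)) := by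
        rw [hausdorffMeasure_two_pi_real]; exact measure_ball_pos _ _ (by norm_num)
    _ ≤ μH[2] (projFstTwo '' sphere 0 1) := measure_mono ball_subset_image_projFstTwo
    _ ≤ μH[2] (sphere (0 : ℝ³) 1) := by
        simpa using lipschitzWith_projFstTwo.hausdorffMeasure_image_le zero_le_two (sphere 0 1)

end HausdorffMeasureSphere

def euclideanCross (a b : ℝ³) : ℝ³ := toLp 2 (a.ofLp ⨯₃ b.ofLp)

local infixl:74 " ×ₑ " => euclideanCross

lemma inner_euclideanCross_right (r a b : ℝ³) : ⟪r, a ×ₑ b⟫ = ⟪r ×ₑ a, b⟫ := by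
  simp only [euclideanCross, EuclideanSpace.inner_eq_star_dotProduct, star_trivial]
  rw [dotProduct_comm, triple_product_permutation, triple_product_permutation]

lemma norm_euclideanCross_sq (a b : ℝ³) : ‖a ×ₑ b‖ ^ 2 = ‖a‖ ^ 2 * ‖b‖ ^ 2 - ⟪a, b⟫ ^ 2 := by
  simp only [← real_inner_self_eq_norm_sq, euclideanCross,
    EuclideanSpace.inner_eq_star_dotProduct, star_trivial, cross_dot_cross]
  rw [dotProduct_comm b.ofLp a.ofLp]
  ring

lemma setAverage_norm_euclideanCross_sq_sphere (r : ℝ³) :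
    ⨍ a in sphere 0 1, ‖r ×ₑ a‖ ^ 2 ∂μH[2] = 2 / 3 * ‖r‖ ^ 2 := by
  have h₀ := hausdorffMeasure_sphere_pos.ne'
  have h := hausdorffMeasure_sphere_lt_top.ne
  have hS : (μH[2] (sphere (0 : ℝ³) 1)).toReal ≠ 0 := ENNReal.toReal_ne_zero.mpr ⟨h₀, h⟩
  rw [setAverage_congr_fun isClosed_sphere.measurableSet (g := fun a => ‖r‖ ^ 2 - ⟪r, a⟫ ^ 2)
      (ae_of_all _ fun a ha => by rw [norm_euclideanCross_sq, mem_sphere_zero_iff_norm.mp ha]; ring),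
    setAverage_eq, integral_sub (integrableOn_const (C := ‖r‖ ^ 2) h enorm_ne_top)
      (integrableOn_inner_sq_sphere h r),
    setIntegral_const, integral_inner_sq_sphere h, finrank_euclideanSpace_fin, measureReal_def]
  simp only [smul_eq_mul, Nat.cast_ofNat]
  field_simp
  ring

lemma pauliObs_mul_sub_mul (a b : ℝ³) :
    pauliObs a * pauliObs b - pauliObs b * pauliObs a = (2 * Complex.I) • pauliObs (a ×ₑ b) := by
  ext i j
  fin_cases i <;> fin_cases j <;>
    simp [pauliObs, pauli, euclideanCross, cross_apply, Fin.sum_univ_three, Complex.ext_iff] <;>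
    constructor <;> ring

lemma isHermitian_pauli (i : Fin 3) : (pauli i).IsHermitian := by
  ext j k
  fin_cases i <;> fin_cases j <;> fin_cases k <;> simp [pauli]

lemma Matrix.IsHermitian.im_trace_mul {n : Type*} [Fintype n] {A B : Matrix n n ℂ}
    (hA : A.IsHermitian) (hB : B.IsHermitian) : (A * B).trace.im = 0 :=
  Complex.conj_eq_iff_im.mp <| show star (A * B).trace = (A * B).trace by
    rw [← trace_conjTranspose, conjTranspose_mul, hA.eq, hB.eq, trace_mul_comm]

noncomputable def blochVector (ρ : Matrix (Fin 2) (Fin 2) ℂ) : ℝ³ :=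
  toLp 2 fun i => (ρ * pauli i).trace.re

lemma trace_mul_pauliObs {ρ : Matrix (Fin 2) (Fin 2) ℂ} (hρ : ρ.IsHermitian) (c : ℝ³) :
    (ρ * pauliObs c).trace = (⟪blochVector ρ, c⟫ : ℂ) := by
  calc (ρ * pauliObs c).trace = ∑ i, (c i : ℂ) * (ρ * pauli i).trace := by
        simp [pauliObs, Matrix.mul_sum, trace_sum, trace_smul]
    _ = ∑ i, ((c i * blochVector ρ i : ℝ) : ℂ) := Finset.sum_congr rfl fun i _ => by
        simp [Complex.ext_iff, blochVector, hρ.im_trace_mul (isHermitian_pauli i)]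
    _ = _ := by simp [PiLp.inner_apply]

lemma norm_blochVector_sq {ρ : Matrix (Fin 2) (Fin 2) ℂ} (hρ : ρ.IsHermitian) :
    ‖blochVector ρ‖ ^ 2 = 2 * (ρ * ρ).trace.re - ρ.trace.re ^ 2 := by
  have h10 : ρ 1 0 = star (ρ 0 1) := (hρ.apply 1 0).symm
  have h00 : (ρ 0 0).im = 0 := Complex.conj_eq_iff_im.mp (hρ.apply 0 0)
  have h11 : (ρ 1 1).im = 0 := Complex.conj_eq_iff_im.mp (hρ.apply 1 1)
  simp only [EuclideanSpace.real_norm_sq_eq, Fin.sum_univ_three, blochVector, pauli,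
    trace_fin_two, Matrix.mul_apply, Fin.sum_univ_two, of_apply, cons_val', cons_val_zero,
    cons_val_one, cons_val, cons_val_fin_one, h10, RCLike.star_def, Complex.add_re, Complex.mul_re,
    Complex.conj_re, Complex.conj_im, Complex.zero_re, Complex.zero_im, Complex.one_re,
    Complex.one_im, Complex.neg_re, Complex.neg_im, Complex.I_re, Complex.I_im, h00, h11]
  ring

lemma quarter_norm_sq_trace_mul_commutator {ρ : Matrix (Fin 2) (Fin 2) ℂ} (hρ : ρ.IsHermitian)
    (a b : ℝ³) :
    1 / 4 * ‖(ρ * (pauliObs a * pauliObs b - pauliObs b * pauliObs a)).trace‖ ^ 2 =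
      ⟪blochVector ρ ×ₑ a, b⟫ ^ 2 := by
  rw [pauliObs_mul_sub_mul, mul_smul_comm, trace_smul, trace_mul_pauliObs hρ,
    inner_euclideanCross_right]
  simp only [smul_eq_mul, Complex.norm_mul, Complex.norm_ofNat, Complex.norm_I, mul_one,
    Complex.norm_real, Real.norm_eq_abs]
  rw [mul_pow, sq_abs]
  ring

/-- The averaged Robertson bound for a qubit equals `(2/9)(2P − 1)`, where
`P = Tr(ρ²)` is the purity; the average is over `a, b` uniform on the unit
sphere `S² ⊆ ℝ³` (with the 2-dimensional Hausdorff measure). -/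
theorem averaged_robertson_bound (ρ : Matrix (Fin 2) (Fin 2) ℂ)
    (hρ : ρ.PosSemidef) (hρtr : ρ.trace = 1) :
    (⨍ a in Metric.sphere (0 : EuclideanSpace ℝ (Fin 3)) 1,
      ⨍ b in Metric.sphere (0 : EuclideanSpace ℝ (Fin 3)) 1,
        (1 / 4) * ‖
          (ρ * (pauliObs a * pauliObs b - pauliObs b * pauliObs a)).trace‖ ^ 2
        ∂(μH[2]) ∂(μH[2])) =
    (2 / 9) * (2 * (ρ * ρ).trace.re - 1) := by
  have hH := hρ.isHermitian
  simp_rw [quarter_norm_sq_trace_mul_commutator hH,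
    setAverage_inner_sq_sphere hausdorffMeasure_sphere_pos.ne' hausdorffMeasure_sphere_lt_top.ne,
    finrank_euclideanSpace_fin, setAverage_div_const, setAverage_norm_euclideanCross_sq_sphere,
    norm_blochVector_sq hH, hρtr, Complex.one_re]
  ring
end
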